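/- arXiv:2405.05544 — 3 statements merged into one kernel-verified Lean document; each statement's English description precedes it below -/
import Mathlib

section
/- For all v, w ∈ P(n), w covers v in the poset (P(n), ⪯_P) (that is, v ≺_P w and there is no u ∈ P(n) with v ≺_P u ≺_P w) if and only if w is obtained from v by applying exactly one operator from the list: the addition operator A^(n), or a swap operator S^(k,k+1) for some k ∈ {1,…,n−1}. -/
open Finset

/-- Cumulative sum: `x 0 + ... + x k`. -/
def cum {n : ℕ} (x : Fin n → ℤ) (k : Fin n) : ℤ := ∑ i ∈ Finset.Iic k, x i

/-- The partial order `⪯`: every partial sum of `x` is at most that of `y`. -/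
def ple {n : ℕ} (x y : Fin n → ℤ) : Prop := ∀ k : Fin n, cum x k ≤ cum y k

/-- Membership in `P(n)`: all entries are `1` or `-1`. -/
def isPM {n : ℕ} (v : Fin n → ℤ) : Prop := ∀ i, v i = 1 ∨ v i = -1

/-- Membership in `Q(n)`. -/
def inQ {n : ℕ} (v : Fin n → ℤ) : Prop := isPM v ∧ ¬ ple v 0 ∧ ¬ ple 0 v

/-- Standard inner product on `ℤ^n`. -/
def dotp {n : ℕ} (x y : Fin n → ℤ) : ℤ := ∑ i, x i * y i

/-- The ±1 vector of a subset `S`. -/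
def pS {n : ℕ} (S : Finset (Fin n)) : Fin n → ℤ := fun i => if i ∈ S then 1 else -1

/-- The vector `m_k`: first `k` entries 1, next `k+1` entries −1, rest 1 (0-indexed). -/
def mvec (n k : ℕ) : Fin n → ℤ := fun i => if i.val < k then 1 else if i.val < 2 * k + 1 then -1 else 1

/-- An instance of the partition problem: `c_1 ≥ c_2 ≥ ⋯ ≥ c_n ≥ 0`. -/
def monoc {n : ℕ} (c : Fin n → ℤ) : Prop := (∀ i j : Fin n, i ≤ j → c j ≤ c i) ∧ ∀ i, 0 ≤ c i

/-!
Encode a vector by its partial sums `cum`, an injective map under which `⪯` becomes the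
pointwise order. Partial sums of two `±1` vectors at the same index have the same parity, so
`w` covers `v` exactly when `cum w` is `cum v` raised by `2` at a single index `m`: anything in
between agrees with `cum v` off `m` and is squeezed to one of the two values at `m`. The moves
`A^(n)` and `S^(k,k+1)` raise the partial sum at the last index, resp. at `k`, and nothing else.
Conversely, if `v ≺ w`, take the last index `m` with `v_m = -1` and `cum v m < cum w m`; then
`v_{m+1} = 1` unless `m` is last, and the move raising `cum v` at `m` stays below `w`, so it
produces `w` when `w` covers `v`.
-/

open Function

section

variable {n : ℕ}

def PCovBy (v w : Fin n → ℤ) : Prop :=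
  ple v w ∧ v ≠ w ∧ ¬ ∃ u : Fin n → ℤ, isPM u ∧ ple v u ∧ v ≠ u ∧ ple u w ∧ u ≠ w

theorem isPM.update {v : Fin n → ℤ} (hv : isPM v) (i : Fin n) {a : ℤ} (ha : a = 1 ∨ a = -1) :
    isPM (update v i a) := by
  intro k
  rcases eq_or_ne k i with rfl | hk
  · simpa using ha
  · simpa [hk] using hv k

theorem cum_sub_cum_of_forall_lt {x y : Fin n → ℤ} {i : Fin n} (h : ∀ j < i, x j = y j) :
    cum x i - cum y i = x i - y i := by
  have hIio : ∑ j ∈ Iio i, x j = ∑ j ∈ Iio i, y j :=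
    sum_congr rfl fun j hj ↦ h j (mem_Iio.1 hj)
  simp only [cum, ← sum_Iio_add_eq_sum_Iic, hIio]
  ring

theorem cum_injective : Injective (cum : (Fin n → ℤ) → Fin n → ℤ) := by
  intro x y h
  funext i
  induction i using WellFoundedLT.induction with
  | _ i ih => linarith [cum_sub_cum_of_forall_lt ih, congrFun h i]

theorem cum_succ (x : Fin n → ℤ) {j : ℕ} (hj : j + 1 < n) :
    cum x ⟨j + 1, hj⟩ = cum x ⟨j, Nat.lt_of_succ_lt hj⟩ + x ⟨j + 1, hj⟩ := by
  rw [cum, ← sum_Iio_add_eq_sum_Iic, cum]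
  congr 2
  ext i
  simp only [mem_Iio, mem_Iic, Fin.lt_def, Fin.le_def]
  omega

theorem cum_update (x : Fin n → ℤ) (j k : Fin n) (a : ℤ) :
    cum (update x j a) k = cum x k + if j ≤ k then a - x j else 0 := by
  unfold cum
  split_ifs with h
  · rw [sum_update_of_mem (mem_Iic.2 h), sum_eq_add_sum_sdiff_singleton_of_mem (mem_Iic.2 h)]
    ring
  · rw [sum_update_of_notMem (by simpa using h)]
    ring

theorem even_cum_sub_cum {u v : Fin n → ℤ} (hu : isPM u) (hv : isPM v) (k : Fin n) :
    Even (cum u k - cum v k) := by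
  rw [cum, cum, ← sum_sub_distrib]
  refine even_sum _ fun i _ ↦ ?_
  rcases hu i with h | h <;> rcases hv i with h' | h' <;> rw [h, h'] <;> decide

theorem cum_update_last {v : Fin n → ℤ} {h : n - 1 < n} (hv : v ⟨n - 1, h⟩ = -1) :
    cum (update v ⟨n - 1, h⟩ 1) = update (cum v) ⟨n - 1, h⟩ (cum v ⟨n - 1, h⟩ + 2) := by
  funext k
  rw [cum_update, hv]
  rcases eq_or_ne k ⟨n - 1, h⟩ with rfl | hk
  · simp
  · have : ¬ (⟨n - 1, h⟩ : Fin n) ≤ k := fun hle ↦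
      hk (le_antisymm (Fin.le_def.2 (Nat.le_sub_one_of_lt k.isLt)) hle)
    simp [hk, this]

theorem cum_swap {v : Fin n → ℤ} {j : ℕ} (hj : j + 1 < n)
    (hvj : v ⟨j, Nat.lt_of_succ_lt hj⟩ = -1) (hvj' : v ⟨j + 1, hj⟩ = 1) :
    cum (update (update v ⟨j, Nat.lt_of_succ_lt hj⟩ 1) ⟨j + 1, hj⟩ (-1)) =
      update (cum v) ⟨j, Nat.lt_of_succ_lt hj⟩ (cum v ⟨j, Nat.lt_of_succ_lt hj⟩ + 2) := by
  funext k
  rw [cum_update, cum_update, update_of_ne (by simp [Fin.ext_iff]), hvj, hvj']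
  rcases eq_or_ne k ⟨j, Nat.lt_of_succ_lt hj⟩ with rfl | hk
  · simp
  · rw [update_of_ne hk]
    simp only [Fin.le_def, ne_eq, Fin.ext_iff] at hk ⊢
    split_ifs <;> omega

theorem ple_and_ne_of_cum_eq_update {v w : Fin n → ℤ} {m : Fin n}
    (hw : cum w = update (cum v) m (cum v m + 2)) : ple v w ∧ v ≠ w := by
  refine ⟨fun k ↦ ?_, fun h ↦ ?_⟩
  · rw [hw]
    rcases eq_or_ne k m with rfl | hk
    · simp
    · simp [hk]
  · have := congrFun hw m
    simp [h] at this

theorem eq_or_eq_of_cum_eq_update {u v w : Fin n → ℤ} {m : Fin n} (hu : isPM u) (hv : isPM v)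
    (hw : cum w = update (cum v) m (cum v m + 2)) (hvu : ple v u) (huw : ple u w) :
    u = v ∨ u = w := by
  have hcu : cum u = update (cum v) m (cum u m) := by
    funext k
    rcases eq_or_ne k m with rfl | hk
    · simp
    · have := huw k
      rw [hw, update_of_ne hk] at this
      simpa [hk] using le_antisymm this (hvu k)
  have hum : cum u m = cum v m ∨ cum u m = cum v m + 2 := by
    obtain ⟨r, hr⟩ := even_cum_sub_cum hu hv m
    have := huw m
    rw [hw, update_self] at this
    have := hvu m
    omega
  rcases hum with h | h
  · exact Or.inl (cum_injective (by rw [hcu, h, update_eq_self]))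
  · exact Or.inr (cum_injective (by rw [hcu, h, hw]))

theorem pCovBy_of_cum_eq_update {v w : Fin n → ℤ} {m : Fin n} (hv : isPM v)
    (hw : cum w = update (cum v) m (cum v m + 2)) : PCovBy v w := by
  obtain ⟨hvw, hne⟩ := ple_and_ne_of_cum_eq_update hw
  refine ⟨hvw, hne, ?_⟩
  rintro ⟨u, hu, hvu, hvu', huw, huw'⟩
  rcases eq_or_eq_of_cum_eq_update hu hv hw hvu huw with rfl | rfl <;> contradiction

theorem PCovBy.eq_of_cum_eq_update {u v w : Fin n → ℤ} {m : Fin n} (hcov : PCovBy v w)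
    (hv : isPM v) (hw : isPM w) (hu : isPM u) (hcu : cum u = update (cum v) m (cum v m + 2))
    (hlt : cum v m < cum w m) : u = w := by
  obtain ⟨hvu, hvu'⟩ := ple_and_ne_of_cum_eq_update hcu
  by_contra huw'
  refine hcov.2.2 ⟨u, hu, hvu, hvu', fun k ↦ ?_, huw'⟩
  rw [hcu]
  rcases eq_or_ne k m with rfl | hk
  · obtain ⟨r, hr⟩ := even_cum_sub_cum hw hv k
    simp only [update_self]
    omega
  · simpa [hk] using hcov.1 k

theorem exists_neg_one_cum_lt {v w : Fin n → ℤ} (hv : isPM v) (hw : isPM w) (hvw : ple v w)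
    (hne : v ≠ w) : ∃ i, v i = -1 ∧ cum v i < cum w i := by
  have hex : ∃ i, v i ≠ w i := by
    by_contra! h
    exact hne (funext h)
  obtain ⟨i, hi, hmin⟩ := wellFounded_lt.has_min {i | v i ≠ w i} hex
  have hdiff := cum_sub_cum_of_forall_lt (x := v) (y := w) (i := i) fun j hj ↦
    not_not.1 fun h ↦ hmin j h hj
  have := hvw i
  rcases hv i with h | h <;> rcases hw i with h' | h' <;> rw [h, h'] at hdiff
  · exact absurd (h.trans h'.symm) hi
  · omega
  · exact ⟨i, h, by omega⟩
  · exact absurd (h.trans h'.symm) hi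

theorem exists_neg_one_cum_lt_next_eq_one {v w : Fin n → ℤ} (hv : isPM v) (hw : isPM w)
    (hvw : ple v w) (hne : v ≠ w) :
    ∃ m : Fin n, v m = -1 ∧ cum v m < cum w m ∧ ∀ h : m.val + 1 < n, v ⟨m.val + 1, h⟩ = 1 := by
  obtain ⟨m, ⟨hvm, hlt⟩, hmax⟩ := wellFounded_gt.has_min {i | v i = -1 ∧ cum v i < cum w i}
    (exists_neg_one_cum_lt hv hw hvw hne)
  refine ⟨m, hvm, hlt, fun h ↦ (hv _).resolve_right fun hv' ↦
    hmax ⟨m.val + 1, h⟩ ⟨hv', ?_⟩ (Fin.lt_def.2 (Nat.lt_succ_self _))⟩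
  rw [cum_succ v h, cum_succ w h, hv', Fin.eta]
  rcases hw ⟨m.val + 1, h⟩ with h' | h' <;> rw [h'] <;> omega

end

theorem stmt1 {n : ℕ} (hn : 1 ≤ n) (v w : Fin n → ℤ) (hv : isPM v) (hw : isPM w) :
    (ple v w ∧ v ≠ w ∧
        ¬ ∃ u : Fin n → ℤ, isPM u ∧ ple v u ∧ v ≠ u ∧ ple u w ∧ u ≠ w) ↔
      ((v ⟨n - 1, by omega⟩ = -1 ∧ w = Function.update v ⟨n - 1, by omega⟩ 1) ∨
        ∃ j : ℕ, ∃ hj : j + 1 < n,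
          v ⟨j, by omega⟩ = -1 ∧ v ⟨j + 1, hj⟩ = 1 ∧
          w = Function.update (Function.update v ⟨j, by omega⟩ 1) ⟨j + 1, hj⟩ (-1)) := by
  change PCovBy v w ↔ _
  constructor
  · intro hcov
    obtain ⟨m, hvm, hlt, hnext⟩ := exists_neg_one_cum_lt_next_eq_one hv hw hcov.1 hcov.2.1
    by_cases hm : m.val + 1 < n
    · refine Or.inr ⟨m, hm, hvm, hnext hm, (hcov.eq_of_cum_eq_update hv hw ?_
        (cum_swap hm hvm (hnext hm)) hlt).symm⟩
      exact (hv.update _ (.inl rfl)).update _ (.inr rfl)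
    · obtain rfl : m = ⟨n - 1, Nat.sub_lt hn Nat.one_pos⟩ := Fin.ext (by simp only; omega)
      exact Or.inl ⟨hvm, (hcov.eq_of_cum_eq_update hv hw (hv.update _ (.inl rfl))
        (cum_update_last hvm) hlt).symm⟩
  · rintro (⟨hlast, rfl⟩ | ⟨j, hj, hvj, hvj', rfl⟩)
    · exact pCovBy_of_cum_eq_update hv (cum_update_last hlast)
    · exact pCovBy_of_cum_eq_update hv (cum_swap hj hvj hvj')
end

section
/- For n ≥ 4 and all integers k, k' with 0 ≤ k ≤ ℓ, 0 ≤ k' ≤ ℓ and k ≠ k', the minimal element −m_k is strictly less than the maximal element m_{k'} in Q(n), i.e., −m_k ≺_Q m_{k'}. -/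
open Finset

lemma sum_g (k m : ℕ) :
    ∑ i ∈ Finset.range m, (if i < k then (1:ℤ) else if i < 2*k+1 then -1 else 1)
      = if m ≤ k then (m:ℤ) else if m ≤ 2*k+1 then 2*(k:ℤ) - m else (m:ℤ) - 2*k - 2 := by
  induction m with
  | zero => simp
  | succ m ih =>
    rw [Finset.sum_range_succ, ih]
    split_ifs <;> push_cast <;> omega

lemma cum_mvec {n : ℕ} (k : ℕ) (j : Fin n) :
    cum (mvec n k) j =
      if (j:ℕ) < k then (j:ℤ) + 1
      else if (j:ℕ) < 2*k+1 then 2*(k:ℤ) - 1 - (j:ℕ)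
      else (j:ℤ) - 2*k - 1 := by
  have hsub : Finset.range ((j:ℕ)+1) ⊆ Finset.range n := by
    apply Finset.range_subset_range.mpr; omega
  have h1 : cum (mvec n k) j
      = ∑ i ∈ Finset.range ((j:ℕ)+1),
          (if i < k then (1:ℤ) else if i < 2*k+1 then -1 else 1) := by
    unfold cum
    rw [show Finset.Iic j = Finset.filter (fun i : Fin n => (i:ℕ) ≤ (j:ℕ)) Finset.univ by
      ext i; simp only [Finset.mem_Iic, Finset.mem_filter, Finset.mem_univ, true_and, Fin.le_def]]
    rw [Finset.sum_filter]
    simp only [mvec]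
    rw [Fin.sum_univ_eq_sum_range
      (fun v => if v ≤ (j:ℕ) then (if v < k then (1:ℤ) else if v < 2*k+1 then -1 else 1) else 0) n]
    rw [← Finset.sum_subset hsub (by intro x hx hx2; simp only [Finset.mem_range] at hx hx2; rw [if_neg (by omega)])]
    apply Finset.sum_congr rfl
    intro x hx
    simp only [Finset.mem_range] at hx
    rw [if_pos (by omega)]
  rw [h1, sum_g]
  split_ifs <;> push_cast <;> omega

lemma cum_neg {n : ℕ} (x : Fin n → ℤ) (j : Fin n) : cum (-x) j = - cum x j := by
  simp [cum, Finset.sum_neg_distrib]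

lemma cum_zero {n : ℕ} (j : Fin n) : cum (0 : Fin n → ℤ) j = 0 := by
  simp [cum]

lemma mvec_exists_pos {n : ℕ} (hn : 4 ≤ n) (k : ℕ) (hk : k ≤ (n - 1) / 2) :
    ∃ j : Fin n, 0 < cum (mvec n k) j := by
  by_cases hk0 : k = 0
  · refine ⟨⟨n-1, by omega⟩, ?_⟩
    rw [cum_mvec]; subst hk0; simp only [Fin.val_mk]
    split_ifs <;> push_cast <;> omega
  · refine ⟨⟨0, by omega⟩, ?_⟩
    rw [cum_mvec]
    simp only [Fin.val_mk]
    split_ifs <;> push_cast <;> omega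

lemma mvec_exists_neg {n : ℕ} (hn : 4 ≤ n) (k : ℕ) (hk : k ≤ (n - 1) / 2) :
    ∃ j : Fin n, cum (mvec n k) j < 0 := by
  refine ⟨⟨2*k, by omega⟩, ?_⟩
  rw [cum_mvec]
  simp only [Fin.val_mk]
  split_ifs <;> push_cast <;> omega

lemma inQ_mvec {n : ℕ} (hn : 4 ≤ n) (k : ℕ) (hk : k ≤ (n - 1) / 2) :
    inQ (mvec n k) := by
  obtain ⟨jp, hjp⟩ := mvec_exists_pos hn k hk
  obtain ⟨jn, hjn⟩ := mvec_exists_neg hn k hk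
  refine ⟨fun i => by unfold mvec; split_ifs <;> simp, ?_, ?_⟩
  · intro h; have := h jp; rw [cum_zero] at this; omega
  · intro h; have := h jn; rw [cum_zero] at this; omega

lemma inQ_neg_mvec {n : ℕ} (hn : 4 ≤ n) (k : ℕ) (hk : k ≤ (n - 1) / 2) :
    inQ (-(mvec n k)) := by
  obtain ⟨jp, hjp⟩ := mvec_exists_pos hn k hk
  obtain ⟨jn, hjn⟩ := mvec_exists_neg hn k hk
  refine ⟨fun i => by simp only [Pi.neg_apply]; unfold mvec; split_ifs <;> simp, ?_, ?_⟩
  · intro h; have := h jn; rw [cum_zero, cum_neg] at this; omega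
  · intro h; have := h jp; rw [cum_zero, cum_neg] at this; omega

theorem stmt9 {n : ℕ} (hn : 4 ≤ n) (k k' : ℕ) (hk : k ≤ (n - 1) / 2)
    (hk' : k' ≤ (n - 1) / 2) (hne : k ≠ k') :
    inQ (-(mvec n k)) ∧ inQ (mvec n k') ∧
      ple (-(mvec n k)) (mvec n k') ∧ -(mvec n k) ≠ mvec n k' := by
  refine ⟨inQ_neg_mvec hn k hk, inQ_mvec hn k' hk', ?_, ?_⟩
  · intro j
    rw [cum_neg, cum_mvec, cum_mvec]
    have hj := j.isLt
    split_ifs <;> omega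
  · intro h
    by_cases h0 : k = 0 ∨ k' = 0
    · have := congrArg (fun v => cum v ⟨n-1, by omega⟩) h
      simp only [cum_neg, cum_mvec, Fin.val_mk] at this
      split_ifs at this <;> omega
    · have := congrArg (fun v => cum v ⟨0, by omega⟩) h
      simp only [cum_neg, cum_mvec, Fin.val_mk] at this
      split_ifs at this <;> omega
end

section
/- For 3 ≤ n ≤ 7, the height of Q(n) — the maximum cardinality of a chain (a subset totally ordered by ⪯_Q) in Q(n) — equals n(n−1)/2 − n(ℓ+1) + 3ℓ(ℓ+1)/2 + 1, where ℓ = ⌊(n−1)/2⌋. -/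
open Finset

/-!
Partial sums of a ±1 vector have a fixed parity at each position, so whenever `x ⪯ y` and
`x ≠ y` the potential `∑ₖ (x₁ + ⋯ + xₖ)` rises by at least 2. A chain in `Q(n)` therefore has
at most `g / 2 + 1` elements, where `g` is the largest potential gap between comparable
elements of `Q(n)`. For `n ≤ 7` an exhaustive check shows that `g / 2 + 1` is the claimed
height, and an explicit chain attains it (for `n = 8` the bound is no longer sharp).
-/

instance {n : ℕ} (x y : Fin n → ℤ) : Decidable (ple x y) :=
  inferInstanceAs (Decidable (∀ k, cum x k ≤ cum y k))

instance {n : ℕ} (v : Fin n → ℤ) : Decidable (inQ v) :=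
  inferInstanceAs (Decidable ((∀ i, v i = 1 ∨ v i = -1) ∧ ¬ ple v 0 ∧ ¬ ple 0 v))

theorem IsChain.card_le_of_add_two_le {α : Type*} {r : α → α → Prop} {A : Finset α}
    (hA : IsChain r (A : Set α)) (f : α → ℤ) (m : ℕ)
    (hf : ∀ x ∈ A, ∀ y ∈ A, r x y → x ≠ y → f x + 2 ≤ f y)
    (hgap : ∀ a ∈ A, ∀ b ∈ A, r a b → f b - f a ≤ 2 * m) :
    #A ≤ m + 1 := by
  rcases A.eq_empty_or_nonempty with rfl | hne
  · simp
  obtain ⟨a, ha, hmin⟩ := A.exists_min_image f hne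
  obtain ⟨b, hb, hmax⟩ := A.exists_max_image f hne
  have hab : f b - f a ≤ 2 * m := by
    by_cases h : a = b
    · subst h; omega
    rcases hA ha hb h with hr | hr
    · exact hgap a ha b hb hr
    · have := hf b hb a ha hr (Ne.symm h); have := hmax a ha; omega
  -- The values of `f` on `A` lie in `[f a, f a + 2m]` and are pairwise at least 2 apart.
  have hmaps : Set.MapsTo (fun x => (f x - f a) / 2) A (Icc 0 (m : ℤ)) := by
    intro x hx
    have := hmin x hx; have := hmax x hx
    simp only [coe_Icc, Set.mem_Icc]; omega
  have hinj : Set.InjOn (fun x => (f x - f a) / 2) A := by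
    intro x hx y hy hxy
    by_contra h
    rcases hA hx hy h with hr | hr
    · have := hf x hx y hy hr h; simp only at hxy; omega
    · have := hf y hy x hx hr (Ne.symm h); simp only at hxy; omega
  simpa using card_le_card_of_injOn _ hmaps hinj

section PlusMinusVectors

variable {n : ℕ}

def potential (v : Fin n → ℤ) : ℤ := ∑ k, cum v k

theorem cum_eq_sum_Iio_add (x : Fin n → ℤ) (k : Fin n) :
    cum x k = ∑ i ∈ Iio k, x i + x k := by
  rw [cum, Iic_eq_cons_Iio, sum_cons, add_comm]

theorem eq_of_forall_cum_eq {x y : Fin n → ℤ} (h : ∀ k, cum x k = cum y k) : x = y := by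
  funext k
  induction k using WellFoundedLT.induction with
  | ind k ih =>
    have hsum : ∑ i ∈ Iio k, x i = ∑ i ∈ Iio k, y i :=
      sum_congr rfl fun i hi => ih i (mem_Iio.1 hi)
    have := h k
    rw [cum_eq_sum_Iio_add, cum_eq_sum_Iio_add, hsum] at this
    omega

theorem even_cum_sub {x y : Fin n → ℤ} (hx : isPM x) (hy : isPM y) (k : Fin n) :
    Even (cum y k - cum x k) := by
  rw [cum, cum, ← sum_sub_distrib]
  refine even_sum _ fun i _ => ?_
  rcases hx i with h | h <;> rcases hy i with h' | h' <;> rw [h, h'] <;> decide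

theorem potential_add_two_le {x y : Fin n → ℤ} (hx : isPM x) (hy : isPM y) (hxy : ple x y)
    (hne : x ≠ y) : potential x + 2 ≤ potential y := by
  obtain ⟨k, hk⟩ : ∃ k, cum x k ≠ cum y k := by
    by_contra! h
    exact hne (eq_of_forall_cum_eq h)
  obtain ⟨c, hc⟩ := even_cum_sub hx hy k
  have hle : ∑ j ∈ univ.erase k, cum x j ≤ ∑ j ∈ univ.erase k, cum y j :=
    sum_le_sum fun j _ => hxy j
  have := hxy k
  rw [potential, potential, ← add_sum_erase _ _ (mem_univ k), ← add_sum_erase _ _ (mem_univ k)]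
  omega

theorem pS_filter_eq_one {v : Fin n → ℤ} (hv : isPM v) : pS {i | v i = 1} = v := by
  funext i
  rcases hv i with h | h <;> simp [pS, h]

end PlusMinusVectors

def chainCardsQ (n : ℕ) : Set ℕ :=
  {k | ∃ A : Finset (Fin n → ℤ), (∀ v ∈ A, inQ v) ∧ IsChain ple (A : Set (Fin n → ℤ)) ∧ #A = k}

theorem card_le_of_potential_gap {n : ℕ} (m : ℕ)
    (hgap : ∀ S T : Finset (Fin n), inQ (pS S) → inQ (pS T) → ple (pS S) (pS T) →
      potential (pS T) - potential (pS S) ≤ 2 * m)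
    {A : Finset (Fin n → ℤ)} (hQ : ∀ v ∈ A, inQ v) (hA : IsChain ple (A : Set (Fin n → ℤ))) :
    #A ≤ m + 1 := by
  refine hA.card_le_of_add_two_le potential m
    (fun x hx y hy => potential_add_two_le (hQ x hx).1 (hQ y hy).1) fun a ha b hb hab => ?_
  have := hgap {i | a i = 1} {i | b i = 1}
  rw [pS_filter_eq_one (hQ a ha).1, pS_filter_eq_one (hQ b hb).1] at this
  exact this (hQ a ha) (hQ b hb) hab

theorem isGreatest_chainCardsQ {n : ℕ} (m : ℕ) (A : Finset (Fin n → ℤ))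
    (hQ : ∀ v ∈ A, inQ v) (hA : IsChain ple (A : Set (Fin n → ℤ))) (hcard : #A = m + 1)
    (hgap : ∀ S T : Finset (Fin n), inQ (pS S) → inQ (pS T) → ple (pS S) (pS T) →
      potential (pS T) - potential (pS S) ≤ 2 * m) :
    IsGreatest (chainCardsQ n) (m + 1) :=
  ⟨⟨A, hQ, hA, hcard⟩, fun _ ⟨_, hQ', hA', hcard'⟩ =>
    hcard' ▸ card_le_of_potential_gap m hgap hQ' hA'⟩

theorem isGreatest_chainCardsQ_three : IsGreatest (chainCardsQ 3) 1 :=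
  isGreatest_chainCardsQ 0 {![-1, 1, 1]}
    (by decide +kernel) (by unfold IsChain; decide +kernel) (by decide +kernel) (by decide +kernel)

theorem isGreatest_chainCardsQ_four : IsGreatest (chainCardsQ 4) 2 :=
  isGreatest_chainCardsQ 1
    {![-1, 1, 1, -1], ![-1, 1, 1, 1]}
    (by decide +kernel) (by unfold IsChain; decide +kernel) (by decide +kernel) (by decide +kernel)

theorem isGreatest_chainCardsQ_five : IsGreatest (chainCardsQ 5) 5 :=
  isGreatest_chainCardsQ 4
    {![-1, -1, 1, 1, 1], ![-1, 1, -1, 1, 1], ![-1, 1, 1, -1, 1], ![-1, 1, 1, 1, -1],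
      ![-1, 1, 1, 1, 1]}
    (by decide +kernel) (by unfold IsChain; decide +kernel) (by decide +kernel) (by decide +kernel)

theorem isGreatest_chainCardsQ_six : IsGreatest (chainCardsQ 6) 7 :=
  isGreatest_chainCardsQ 6
    {![-1, -1, 1, 1, 1, -1], ![-1, -1, 1, 1, 1, 1], ![-1, 1, -1, 1, 1, 1], ![-1, 1, 1, -1, 1, 1],
      ![-1, 1, 1, 1, -1, 1], ![-1, 1, 1, 1, 1, -1], ![-1, 1, 1, 1, 1, 1]}
    (by decide +kernel) (by unfold IsChain; decide +kernel) (by decide +kernel) (by decide +kernel)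

theorem isGreatest_chainCardsQ_seven : IsGreatest (chainCardsQ 7) 12 :=
  isGreatest_chainCardsQ 11
    {![-1, -1, -1, 1, 1, 1, 1], ![-1, -1, 1, -1, 1, 1, 1], ![-1, -1, 1, 1, -1, 1, 1],
      ![-1, -1, 1, 1, 1, -1, 1], ![-1, -1, 1, 1, 1, 1, -1], ![-1, -1, 1, 1, 1, 1, 1],
      ![-1, 1, -1, 1, 1, 1, 1], ![-1, 1, 1, -1, 1, 1, 1], ![-1, 1, 1, 1, -1, 1, 1],
      ![-1, 1, 1, 1, 1, -1, 1], ![-1, 1, 1, 1, 1, 1, -1], ![-1, 1, 1, 1, 1, 1, 1]}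
    (by decide +kernel) (by unfold IsChain; decide +kernel) (by decide +kernel) (by decide +kernel)

theorem stmt11 {n : ℕ} (hn3 : 3 ≤ n) (hn7 : n ≤ 7) :
    ∃ h : ℕ,
      IsGreatest {k | ∃ A : Finset (Fin n → ℤ),
          (∀ v ∈ A, inQ v) ∧ IsChain ple (A : Set (Fin n → ℤ)) ∧ A.card = k} h ∧
      (h : ℤ) = (n : ℤ) * (n - 1) / 2 - n * (((n - 1 : ℕ) / 2 : ℕ) + 1)
        + 3 * ((n - 1 : ℕ) / 2 : ℕ) * (((n - 1 : ℕ) / 2 : ℕ) + 1) / 2 + 1 := by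
  interval_cases n
  · exact ⟨1, isGreatest_chainCardsQ_three, by norm_num⟩
  · exact ⟨2, isGreatest_chainCardsQ_four, by norm_num⟩
  · exact ⟨5, isGreatest_chainCardsQ_five, by norm_num⟩
  · exact ⟨7, isGreatest_chainCardsQ_six, by norm_num⟩
  · exact ⟨12, isGreatest_chainCardsQ_seven, by norm_num⟩
end
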